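/- Let n ≥ 1, let L be a finite set, let ρ be a permutation of [n] ∪ L, let M ≥ 1 and let i be an integer with M ≤ i ≤ n such that ρ(j−1) = j for every j with i−M+1 ≤ j ≤ i. Then all the corresponding faces agree: D_{i−1}(ρ) = D_{i−2}(ρ) = … = D_{i−M}(ρ). (Equivalently, if ρ = λ⁻¹ ∘ (0 1 … n), the hypothesis says that i, i−1, …, i−M+1 are consecutive fixed points of λ; this is the key step showing that all faces taken along a fence of a Sullivan diagram coincide.) -/
import Mathlib


/-- `Option α ⊕ β ≃ Option (α ⊕ β)`, sending `inl none` to `none`. -/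
def optionSumEquiv (α β : Type*) : (Option α ⊕ β) ≃ Option (α ⊕ β) where
  toFun x :=
    match x with
    | Sum.inl (some a) => some (Sum.inl a)
    | Sum.inl none => none
    | Sum.inr b => some (Sum.inr b)
  invFun x :=
    match x with
    | some (Sum.inl a) => Sum.inl (some a)
    | some (Sum.inr b) => Sum.inr b
    | none => Sum.inl none
  left_inv x := by rcases x with (_ | a) | b <;> rfl
  right_inv x := by rcases x with _ | (a | b) <;> rfl

/-- The identification of `[n] ∪ L` with `Option ([n-1] ∪ L)` sending `i` to `none`:
away from `i` it is the order-preserving renormalization `[n] \ {i} → [n-1]`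
(the inverse of `d_i`, i.e. the map `s_i` restricted to `[n] \ {i}`), and the identity on `L`. -/
def faceEquiv (n : ℕ) (L : Type*) (i : Fin (n + 1)) :
    (Fin (n + 1) ⊕ L) ≃ Option (Fin n ⊕ L) :=
  ((finSuccEquiv' i).sumCongr (Equiv.refl L)).trans (optionSumEquiv (Fin n) L)

/-- The `i`-th face map `D_i : Symm([n] ∪ L) → Symm([n-1] ∪ L)`, given by
`D_i(α) = s_i ∘ α ∘ (i α⁻¹(i)) ∘ d_i`, i.e. removing the symbol `i` from the cycle
decomposition of `α` and renormalizing the remaining elements of `[n]`. -/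
def faceMap {n : ℕ} {L : Type*} (i : Fin (n + 1)) (α : Equiv.Perm (Fin (n + 1) ⊕ L)) :
    Equiv.Perm (Fin n ⊕ L) :=
  Equiv.removeNone (((faceEquiv n L i).symm.trans α).trans (faceEquiv n L i))


set_option maxHeartbeats 1600000

section Aux
attribute [local instance] Classical.propDecidable
variable {L : Type*} {n : ℕ}

lemma fe_inl_self (i : Fin (n+1)) : faceEquiv n L i (Sum.inl i) = none := by
  simp [faceEquiv, optionSumEquiv]

lemma fe_inl_lt (i t : Fin (n+1)) (h : t.1 < i.1) :
    faceEquiv n L i (Sum.inl t) = some (Sum.inl ⟨t.1, by have := i.isLt; omega⟩) := by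
  have h1 : finSuccEquiv' i t = some ⟨t.1, by have := i.isLt; omega⟩ := by
    have ht : Fin.castSucc ⟨t.1, by have := i.isLt; omega⟩ = t := by apply Fin.ext; simp
    conv_lhs => rw [← ht]
    exact finSuccEquiv'_below (by simp only [Fin.lt_def, Fin.castSucc_mk]; exact h)
  simp [faceEquiv, optionSumEquiv, h1]

lemma fe_inl_gt (i t : Fin (n+1)) (h : i.1 < t.1) :
    faceEquiv n L i (Sum.inl t) = some (Sum.inl ⟨t.1 - 1, by have := t.isLt; omega⟩) := by
  have h1 : finSuccEquiv' i t = some ⟨t.1 - 1, by have := t.isLt; omega⟩ := by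
    have ht : Fin.succ ⟨t.1 - 1, by have := t.isLt; omega⟩ = t := by
      apply Fin.ext; simp; omega
    conv_lhs => rw [← ht]
    exact finSuccEquiv'_above (by simp [Fin.le_def]; omega)
  simp [faceEquiv, optionSumEquiv, h1]

lemma fe_inr (i : Fin (n+1)) (l : L) : faceEquiv n L i (Sum.inr l) = some (Sum.inr l) := by
  simp [faceEquiv, optionSumEquiv]

lemma fe_symm_none (i : Fin (n+1)) : (faceEquiv n L i).symm none = Sum.inl i := by
  rw [Equiv.symm_apply_eq]; exact (fe_inl_self i).symm

lemma fe_symm_inl_lt (i : Fin (n+1)) (j : Fin n) (h : j.1 < i.1) :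
    (faceEquiv n L i).symm (some (Sum.inl j)) = Sum.inl ⟨j.1, by have := j.isLt; omega⟩ := by
  rw [Equiv.symm_apply_eq, fe_inl_lt i ⟨j.1, by have := j.isLt; omega⟩ (by simpa)]

lemma fe_symm_inl_ge (i : Fin (n+1)) (j : Fin n) (h : i.1 ≤ j.1) :
    (faceEquiv n L i).symm (some (Sum.inl j)) = Sum.inl ⟨j.1 + 1, by have := j.isLt; omega⟩ := by
  rw [Equiv.symm_apply_eq, fe_inl_gt i ⟨j.1 + 1, by have := j.isLt; omega⟩ (by simp; omega)]
  simp

lemma fe_symm_inr (i : Fin (n+1)) (l : L) :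
    (faceEquiv n L i).symm (some (Sum.inr l)) = Sum.inr l := by
  rw [Equiv.symm_apply_eq, fe_inr]

lemma fe_ne_none (i : Fin (n+1)) (b : Fin (n+1) ⊕ L) (hb : b ≠ Sum.inl i) :
    faceEquiv n L i b ≠ none := fun hc =>
  hb ((faceEquiv n L i).injective (hc.trans (fe_inl_self i).symm))

lemma faceMap_apply (i : Fin (n+1)) (ρ : Equiv.Perm (Fin (n+1) ⊕ L)) (x : Fin n ⊕ L) :
    some (faceMap i ρ x) =
      if ρ ((faceEquiv n L i).symm (some x)) = Sum.inl i
        then faceEquiv n L i (ρ (Sum.inl i))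
        else faceEquiv n L i (ρ ((faceEquiv n L i).symm (some x))) := by
  set φ := faceEquiv n L i with hφ
  set E := (φ.symm.trans ρ).trans φ with hE
  have hEx : E (some x) = φ (ρ (φ.symm (some x))) := rfl
  have hfm : faceMap i ρ x = Equiv.removeNone E x := rfl
  by_cases hc : ρ (φ.symm (some x)) = Sum.inl i
  · rw [if_pos hc]
    have h0 : E (some x) = none := by rw [hEx, hc]; exact fe_inl_self i
    have h1 := Equiv.removeNone_none E h0
    have hn : E none = φ (ρ (Sum.inl i)) := by
      show φ (ρ (φ.symm none)) = _
      rw [fe_symm_none]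
    rw [hfm, h1, hn]
  · rw [if_neg hc]
    have h0 : E (some x) ≠ none := by rw [hEx]; exact fe_ne_none i _ hc
    obtain ⟨y, hy⟩ := Option.ne_none_iff_exists'.mp h0
    rw [hfm, Equiv.removeNone_some E ⟨y, hy⟩]
    exact hEx

lemma fe_eq_fe (k : ℕ) (hk : k + 1 ≤ n) (b : Fin (n+1) ⊕ L)
    (h0 : b ≠ Sum.inl ⟨k, by omega⟩) (h1 : b ≠ Sum.inl ⟨k+1, by omega⟩) :
    faceEquiv n L ⟨k, by omega⟩ b = faceEquiv n L ⟨k+1, by omega⟩ b := by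
  rcases b with t | l
  · rcases Nat.lt_trichotomy t.1 k with h | h | h
    · rw [fe_inl_lt _ _ h, fe_inl_lt _ _ (by simp; omega)]
    · exact (h0 (by simp [Fin.ext_iff]; omega)).elim
    · have h' : k + 1 < t.1 := by
        rcases Nat.lt_or_ge (k+1) t.1 with h' | h'
        · exact h'
        · exact (h1 (by simp [Fin.ext_iff]; omega)).elim
      rw [fe_inl_gt _ _ (by simpa), fe_inl_gt _ _ (by simp; omega)]
  · rw [fe_inr, fe_inr]

lemma generic_case {m : ℕ} (ρ : Equiv.Perm (Fin (m+1) ⊕ L)) (k : ℕ) (hk : k + 1 ≤ m)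
    (h : ρ (Sum.inl ⟨k, by omega⟩) = Sum.inl ⟨k+1, by omega⟩)
    (a : Fin (m+1) ⊕ L) (ha : a ≠ Sum.inl ⟨k, by omega⟩) :
    (if ρ a = Sum.inl (⟨k, by omega⟩ : Fin (m+1))
      then faceEquiv m L ⟨k, by omega⟩ (ρ (Sum.inl ⟨k, by omega⟩))
      else faceEquiv m L ⟨k, by omega⟩ (ρ a)) =
    (if ρ a = Sum.inl (⟨k+1, by omega⟩ : Fin (m+1))
      then faceEquiv m L ⟨k+1, by omega⟩ (ρ (Sum.inl ⟨k+1, by omega⟩))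
      else faceEquiv m L ⟨k+1, by omega⟩ (ρ a)) := by
  have hne1 : ρ a ≠ Sum.inl ⟨k+1, by omega⟩ := fun hc => ha (ρ.injective (hc.trans h.symm))
  rw [if_neg hne1]
  by_cases hc : ρ a = Sum.inl ⟨k, by omega⟩
  · rw [if_pos hc, hc, h]
    rw [fe_inl_gt _ _ (by simp), fe_inl_lt _ _ (by simp)]
    simp
  · rw [if_neg hc]
    exact fe_eq_fe k hk _ hc hne1

lemma faceMap_step {m : ℕ} (ρ : Equiv.Perm (Fin (m+1) ⊕ L)) (k : ℕ) (hk : k + 1 ≤ m)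
    (h : ρ (Sum.inl ⟨k, by omega⟩) = Sum.inl ⟨k+1, by omega⟩) :
    faceMap (⟨k, by omega⟩ : Fin (m+1)) ρ = faceMap (⟨k+1, by omega⟩ : Fin (m+1)) ρ := by
  apply Equiv.ext; intro x
  apply Option.some_injective
  rw [faceMap_apply, faceMap_apply]
  rcases x with j | l
  · rcases Nat.lt_trichotomy j.1 k with hj | hj | hj
    · rw [fe_symm_inl_lt _ _ (show j.1 < k from hj),
        fe_symm_inl_lt _ _ (show j.1 < k+1 by omega)]
      exact generic_case ρ k hk h _ (by simp [Fin.ext_iff]; omega)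
    · rw [fe_symm_inl_ge _ _ (show (k:ℕ) ≤ j.1 by omega),
        fe_symm_inl_lt _ _ (show j.1 < k+1 by omega)]
      have e1 : (⟨j.1 + 1, by have := j.isLt; omega⟩ : Fin (m+1)) = ⟨k+1, by omega⟩ :=
        Fin.ext (by simp; omega)
      have e2 : (⟨j.1, by have := j.isLt; omega⟩ : Fin (m+1)) = ⟨k, by omega⟩ :=
        Fin.ext (by simpa)
      rw [e1, e2, h, if_pos rfl]
      by_cases hc : ρ (Sum.inl (⟨k+1, by omega⟩ : Fin (m+1))) = Sum.inl ⟨k, by omega⟩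
      · rw [if_pos hc, hc]
        rw [fe_inl_gt _ _ (by simp), fe_inl_lt _ _ (by simp)]
        simp
      · rw [if_neg hc]
        have hc2 : ρ (Sum.inl (⟨k+1, by omega⟩ : Fin (m+1))) ≠ Sum.inl ⟨k+1, by omega⟩ := by
          intro hcc
          have := ρ.injective (h.trans hcc.symm)
          simp [Fin.ext_iff] at this
        exact fe_eq_fe k hk _ hc hc2
    · rw [fe_symm_inl_ge _ _ (show (k:ℕ) ≤ j.1 by omega),
        fe_symm_inl_ge _ _ (show (k+1:ℕ) ≤ j.1 by omega)]
      exact generic_case ρ k hk h _ (by simp [Fin.ext_iff]; omega)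
  · rw [fe_symm_inr, fe_symm_inr]
    exact generic_case ρ k hk h _ (by simp)

end Aux


/-- For `n ≥ 1` (here `[n]` is realized as `Fin (n+2)` with `n ↦ n+1`),
a finite set `L`, a permutation `ρ` of `[n] ∪ L`, `M ≥ 1` and `M ≤ i ≤ n` such that
`ρ(j-1) = j` for every `j` with `i-M+1 ≤ j ≤ i`, all the corresponding faces agree:
`D_{i-1}(ρ) = D_{i-2}(ρ) = … = D_{i-M}(ρ)`. -/
theorem stmt_7 {L : Type} [Finite L] (n : ℕ) (ρ : Equiv.Perm (Fin (n + 2) ⊕ L))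
    (M i : ℕ) (hM : 1 ≤ M) (hMi : M ≤ i) (hi : i ≤ n + 1)
    (hfence : ∀ (j : ℕ) (hj1 : i - M + 1 ≤ j) (hj2 : j ≤ i),
      ρ (Sum.inl (⟨j - 1, by omega⟩ : Fin (n + 2))) = Sum.inl (⟨j, by omega⟩ : Fin (n + 2))) :
    ∀ (j : ℕ) (hj1 : i - M ≤ j) (hj2 : j ≤ i - 1),
      faceMap (⟨j, by omega⟩ : Fin (n + 2)) ρ =
        faceMap (⟨i - 1, by omega⟩ : Fin (n + 2)) ρ := by
  intro j hj1 hj2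
  have key : ∀ t : ℕ, t ≤ i - 1 - j →
      faceMap (⟨i - 1 - t, by omega⟩ : Fin (n + 2)) ρ =
        faceMap (⟨i - 1, by omega⟩ : Fin (n + 2)) ρ := by
    intro t
    induction t with
    | zero =>
      intro _
      have e : (⟨i - 1 - 0, by omega⟩ : Fin (n + 2)) = ⟨i - 1, by omega⟩ := by apply Fin.ext; dsimp only; omega
      rw [e]
    | succ t ih =>
      intro ht
      have hρ : ρ (Sum.inl (⟨i - 1 - (t + 1), by omega⟩ : Fin (n + 2))) =
          Sum.inl (⟨i - 1 - (t + 1) + 1, by omega⟩ : Fin (n + 2)) := by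
        have h2 := hfence (i - 1 - t) (by omega) (by omega)
        have e1 : (⟨i - 1 - (t + 1), by omega⟩ : Fin (n + 2)) =
            ⟨i - 1 - t - 1, by omega⟩ := by apply Fin.ext; dsimp only; omega
        have e2 : (⟨i - 1 - (t + 1) + 1, by omega⟩ : Fin (n + 2)) =
            ⟨i - 1 - t, by omega⟩ := by apply Fin.ext; dsimp only; omega
        rw [e1, e2]; exact h2
      have hs := faceMap_step (m := n + 1) ρ (i - 1 - (t + 1)) (by omega) hρ
      have e3 : (⟨i - 1 - (t + 1) + 1, by omega⟩ : Fin (n + 2)) =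
          ⟨i - 1 - t, by omega⟩ := by apply Fin.ext; dsimp only; omega
      rw [e3] at hs
      exact hs.trans (ih (by omega))
  have hkey := key (i - 1 - j) le_rfl
  have e : (⟨i - 1 - (i - 1 - j), by omega⟩ : Fin (n + 2)) = ⟨j, by omega⟩ := by apply Fin.ext; dsimp only; omega
  rw [e] at hkey
  exact hkey
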